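/- (A–B covering lemma) Let Q₁ be the unit cube in ℝⁿ and let δ ∈ (0,1). Suppose A ⊂ B ⊂ Q₁ are Lebesgue measurable sets such that (i) |A| ≤ δ |Q₁|, and (ii) for every dyadic subcube Q ⊊ Q₁, if |A ∩ Q| > δ |Q| then the dyadic predecessor of Q is contained in B. Then |A| ≤ δ |B|. -/

import Mathlib

open MeasureTheory Set Filter
open scoped ENNReal Topology

noncomputable section

/-- The dyadic subcube of `[0,1]ⁿ` of generation `k` indexed by `m : Fin n → ℕ`
(with `m i < 2^k`): the product of the intervals `[m i / 2^k, (m i + 1) / 2^k]`. -/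
def dyadicCube (n k : ℕ) (m : Fin n → ℕ) : Set (Fin n → ℝ) :=
  Set.univ.pi fun i => Set.Icc ((m i : ℝ) / 2 ^ k) (((m i : ℝ) + 1) / 2 ^ k)

/-- The unit cube `[0,1]ⁿ`. -/
def unitCube (n : ℕ) : Set (Fin n → ℝ) :=
  Set.univ.pi fun _ => Set.Icc (0 : ℝ) 1

lemma measurable_dyadicCube (n k : ℕ) (m : Fin n → ℕ) :
    MeasurableSet (dyadicCube n k m) :=
  MeasurableSet.univ_pi fun _ => measurableSet_Icc

lemma volume_dyadicCube (n k : ℕ) (m : Fin n → ℕ) :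
    volume (dyadicCube n k m) = ENNReal.ofReal ((((2:ℝ)^k)⁻¹) ^ n) := by
  rw [dyadicCube, volume_pi_pi]
  have : ∀ i : Fin n, volume (Set.Icc ((m i : ℝ) / 2 ^ k) (((m i : ℝ) + 1) / 2 ^ k))
      = ENNReal.ofReal (((2:ℝ)^k)⁻¹) := by
    intro i
    rw [Real.volume_Icc]
    congr 1
    field_simp
    ring
  simp only [this, Finset.prod_const, Finset.card_univ, Fintype.card_fin]
  rw [← ENNReal.ofReal_pow (by positivity)]

lemma dyadicCube_subset_pred (n k : ℕ) (hk : 1 ≤ k) (m : Fin n → ℕ) :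
    dyadicCube n k m ⊆ dyadicCube n (k - 1) (fun i => m i / 2) := by
  obtain ⟨j, rfl⟩ : ∃ j, k = j + 1 := ⟨k - 1, by omega⟩
  simp only [Nat.add_sub_cancel]
  apply Set.pi_mono
  intro i _
  apply Set.Icc_subset_Icc
  · rw [div_le_div_iff₀ (by positivity) (by positivity)]
    push_cast
    have h1 : (↑(m i / 2) : ℝ) * 2 ≤ m i := by
      have := Nat.div_mul_le_self (m i) 2
      exact_mod_cast this
    calc (↑(m i / 2) : ℝ) * 2 ^ (j+1) = ((↑(m i / 2) : ℝ) * 2) * 2 ^ j := by ring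
    _ ≤ (m i : ℝ) * 2 ^ j := by nlinarith [pow_pos (show (0:ℝ) < 2 by norm_num) j]
  · rw [div_le_div_iff₀ (by positivity) (by positivity)]
    push_cast
    have h1 : (m i : ℝ) + 1 ≤ ((↑(m i / 2) : ℝ) + 1) * 2 := by
      have : m i < (m i / 2 + 1) * 2 := by omega
      exact_mod_cast this
    calc ((m i : ℝ) + 1) * 2 ^ j ≤ (((↑(m i / 2) : ℝ) + 1) * 2) * 2 ^ j := by
          nlinarith [pow_pos (show (0:ℝ) < 2 by norm_num) j]
    _ = ((↑(m i / 2) : ℝ) + 1) * 2 ^ (j+1) := by ring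

-- dichotomy
lemma dyadic_dichotomy (n k l : ℕ) (hkl : k ≤ l) (m p : Fin n → ℕ) :
    dyadicCube n l p ⊆ dyadicCube n k m ∨ volume (dyadicCube n k m ∩ dyadicCube n l p) = 0 := by
  by_cases h : ∀ i, m i * 2 ^ (l - k) ≤ p i ∧ p i + 1 ≤ (m i + 1) * 2 ^ (l - k)
  · left
    apply Set.pi_mono
    intro i _
    obtain ⟨h1, h2⟩ := h i
    have hlk : (2:ℝ) ^ k * 2 ^ (l - k) = 2 ^ l := by
      rw [← pow_add]; congr 1; omega
    apply Set.Icc_subset_Icc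
    · rw [div_le_div_iff₀ (by positivity) (by positivity)]
      have h1' : (m i : ℝ) * 2 ^ (l - k) ≤ p i := by exact_mod_cast h1
      calc (m i : ℝ) * 2 ^ l = ((m i : ℝ) * 2 ^ (l-k)) * 2 ^ k := by rw [← hlk]; ring
      _ ≤ (p i : ℝ) * 2 ^ k := by nlinarith [pow_pos (show (0:ℝ) < 2 by norm_num) k]
    · rw [div_le_div_iff₀ (by positivity) (by positivity)]
      have h2' : (p i : ℝ) + 1 ≤ ((m i : ℝ) + 1) * 2 ^ (l - k) := by exact_mod_cast h2
      calc ((p i : ℝ) + 1) * 2 ^ k ≤ (((m i : ℝ) + 1) * 2 ^ (l-k)) * 2 ^ k := by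
            nlinarith [pow_pos (show (0:ℝ) < 2 by norm_num) k]
      _ = ((m i : ℝ) + 1) * 2 ^ l := by rw [← hlk]; ring
  · right
    push_neg at h
    obtain ⟨i, hi⟩ := h
    rw [show dyadicCube n k m ∩ dyadicCube n l p
        = Set.univ.pi (fun i => Set.Icc ((m i : ℝ) / 2 ^ k) (((m i : ℝ) + 1) / 2 ^ k)
            ∩ Set.Icc ((p i : ℝ) / 2 ^ l) (((p i : ℝ) + 1) / 2 ^ l)) by
      rw [Set.pi_inter_distrib]; rfl]
    rw [volume_pi_pi]
    apply Finset.prod_eq_zero (Finset.mem_univ i)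
    rw [Set.Icc_inter_Icc, Real.volume_Icc]
    rw [ENNReal.ofReal_eq_zero]
    have hlk : (2:ℝ) ^ k * 2 ^ (l - k) = 2 ^ l := by
      rw [← pow_add]; congr 1; omega
    rcases Nat.lt_or_ge (p i) (m i * 2 ^ (l - k)) with hc | hc
    · -- p i + 1 ≤ m i * 2^(l-k) : right endpoint (p i+1)/2^l ≤ left m i/2^k
      have hc' : (p i : ℝ) + 1 ≤ (m i : ℝ) * 2 ^ (l - k) := by exact_mod_cast hc
      have : ((p i : ℝ) + 1) / 2 ^ l ≤ (m i : ℝ) / 2 ^ k := by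
        rw [div_le_div_iff₀ (by positivity) (by positivity)]
        calc ((p i : ℝ) + 1) * 2 ^ k ≤ ((m i:ℝ) * 2 ^ (l-k)) * 2 ^ k := by
              nlinarith [pow_pos (show (0:ℝ) < 2 by norm_num) k]
        _ = (m i : ℝ) * 2 ^ l := by rw [← hlk]; ring
      have h1 : (((m i : ℝ) + 1) / 2 ^ k) ⊓ (((p i : ℝ) + 1) / 2 ^ l)
          ≤ ((m i : ℝ) / 2 ^ k) ⊔ ((p i : ℝ) / 2 ^ l) := by
        exact le_trans (inf_le_right) (le_trans this le_sup_left)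
      linarith
    · have hc2 : (m i + 1) * 2 ^ (l - k) < p i + 1 := hi hc
      have hc2' : (m i + 1) * 2 ^ (l - k) ≤ p i := by omega
      have hc' : ((m i : ℝ) + 1) * 2 ^ (l - k) ≤ p i := by exact_mod_cast hc2'
      have : ((m i : ℝ) + 1) / 2 ^ k ≤ (p i : ℝ) / 2 ^ l := by
        rw [div_le_div_iff₀ (by positivity) (by positivity)]
        calc ((m i : ℝ) + 1) * 2 ^ l = (((m i:ℝ)+1) * 2 ^ (l-k)) * 2 ^ k := by rw [← hlk]; ring
        _ ≤ (p i : ℝ) * 2 ^ k := by nlinarith [pow_pos (show (0:ℝ) < 2 by norm_num) k]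
      have h1 : (((m i : ℝ) + 1) / 2 ^ k) ⊓ (((p i : ℝ) + 1) / 2 ^ l)
          ≤ ((m i : ℝ) / 2 ^ k) ⊔ ((p i : ℝ) / 2 ^ l) := by
        exact le_trans (inf_le_left) (le_trans this le_sup_right)
      linarith

-- same generation containment gives equality
lemma dyadic_same_gen (n k : ℕ) (m p : Fin n → ℕ)
    (h : dyadicCube n k p ⊆ dyadicCube n k m) : p = m := by
  funext i
  have hne : ∀ (q : Fin n → ℕ) (j : Fin n),
      (Set.Icc ((q j : ℝ) / 2 ^ k) (((q j : ℝ) + 1) / 2 ^ k)).Nonempty := by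
    intro q j
    apply Set.nonempty_Icc.2
    apply div_le_div_of_nonneg_right _ (show (0:ℝ) ≤ 2^k by positivity)
    linarith
  rw [dyadicCube, dyadicCube, Set.univ_pi_subset_univ_pi_iff] at h
  rcases h with h | ⟨j, hj⟩
  · have := (Set.Icc_subset_Icc_iff (by
      apply div_le_div_of_nonneg_right _ (show (0:ℝ) ≤ 2^k by positivity); linarith)).1 (h i)
    obtain ⟨h1, h2⟩ := this
    have h1' : (m i : ℝ) ≤ p i := by
      rw [div_le_div_iff₀ (by positivity) (by positivity)] at h1
      nlinarith [pow_pos (show (0:ℝ) < 2 by norm_num) k]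
    have h2' : (p i : ℝ) + 1 ≤ (m i : ℝ) + 1 := by
      rw [div_le_div_iff₀ (by positivity) (by positivity)] at h2
      nlinarith [pow_pos (show (0:ℝ) < 2 by norm_num) k]
    have : (m i : ℕ) ≤ p i := by exact_mod_cast h1'
    have : (p i : ℕ) ≤ m i := by exact_mod_cast (by linarith : (p i:ℝ) ≤ m i)
    omega
  · exact absurd hj (hne p j).ne_empty

lemma exists_bad_cube (n : ℕ) (δ : ℝ) (hδ0 : 0 < δ) (hδ1 : δ < 1)
    (A : Set (Fin n → ℝ)) (x : Fin n → ℝ) (hx0 : ∀ i, 0 ≤ x i) (hx1 : ∀ i, x i ≤ 1)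
    (hx : Tendsto (fun r => volume (A ∩ Metric.closedBall x r) / volume (Metric.closedBall x r))
      (𝓝[>] 0) (𝓝 1)) :
    ∃ k, 1 ≤ k ∧ ∃ m : Fin n → ℕ, (∀ i, m i < 2 ^ k) ∧ x ∈ dyadicCube n k m ∧
      ENNReal.ofReal δ * volume (dyadicCube n k m) < volume (A ∩ dyadicCube n k m) := by
  classical
  have h2n1 : (1:ℝ) ≤ 2 ^ n := one_le_pow₀ (by norm_num)
  set w : ℝ := (1 - δ) / 2 ^ (n + 1) with hwdef
  have hw0 : 0 < w := by rw [hwdef]; exact div_pos (by linarith) (by positivity)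
  have hw1 : w < 1 := by
    rw [hwdef]
    have h1 : (1 - δ) / 2 ^ (n + 1) ≤ (1 - δ) / 2 := by
      apply div_le_div_of_nonneg_left (by linarith) (by norm_num)
      calc (2:ℝ) = 2^1 := by norm_num
      _ ≤ 2 ^ (n+1) := by apply pow_le_pow_right₀ <;> [norm_num; omega]
    linarith
  have hcr0 : 0 < 1 - w := by linarith
  have hcr1 : 1 - w < 1 := by linarith
  set c : ℝ≥0∞ := ENNReal.ofReal (1 - w) with hc
  have hc1 : c < 1 := by
    rw [hc, ← ENNReal.ofReal_one]
    exact (ENNReal.ofReal_lt_ofReal_iff one_pos).2 hcr1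
  have hev : ∀ᶠ r in 𝓝[>] (0:ℝ),
      c < volume (A ∩ Metric.closedBall x r) / volume (Metric.closedBall x r) :=
    hx.eventually (eventually_gt_nhds hc1)
  have hseq : Tendsto (fun k : ℕ => ((2:ℝ) ^ k)⁻¹) atTop (𝓝[>] 0) := by
    rw [tendsto_nhdsWithin_iff]
    constructor
    · simpa [← inv_pow] using
        tendsto_pow_atTop_nhds_zero_of_lt_one (by norm_num : (0:ℝ) ≤ 2⁻¹) (by norm_num)
    · exact Eventually.of_forall fun k => Set.mem_Ioi.2 (by positivity)
  obtain ⟨k, hk1, hrk⟩ : ∃ k : ℕ, 1 ≤ k ∧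
      c < volume (A ∩ Metric.closedBall x ((2:ℝ)^k)⁻¹) /
          volume (Metric.closedBall x ((2:ℝ)^k)⁻¹) := by
    obtain ⟨k, h1, h2⟩ := ((eventually_ge_atTop 1).and (hseq.eventually hev)).exists
    exact ⟨k, h1, h2⟩
  have h2k1 : (1:ℕ) ≤ 2 ^ k := Nat.one_le_two_pow
  have h2kR : (0:ℝ) < 2 ^ k := by positivity
  set m : Fin n → ℕ := fun i => min ⌊(2:ℝ)^k * x i⌋₊ (2^k - 1) with hm
  have hmlt : ∀ i, m i < 2 ^ k := fun i =>
    lt_of_le_of_lt (min_le_right _ _) (by omega)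
  have hcast : ∀ i, ((m i : ℝ)) ≤ (⌊(2:ℝ)^k * x i⌋₊ : ℝ) := fun i =>
    Nat.cast_le.2 (min_le_left _ _)
  have hlow : ∀ i, (m i : ℝ) / 2 ^ k ≤ x i := by
    intro i
    rw [div_le_iff₀ h2kR]
    have h2 : (⌊(2:ℝ)^k * x i⌋₊ : ℝ) ≤ (2:ℝ)^k * x i := Nat.floor_le (mul_nonneg (by positivity) (hx0 i))
    nlinarith [hcast i]
  have hhigh : ∀ i, x i ≤ ((m i : ℝ) + 1) / 2 ^ k := by
    intro i
    rw [le_div_iff₀ h2kR]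
    rcases le_or_gt (⌊(2:ℝ)^k * x i⌋₊) (2^k - 1) with h | h
    · have hmf : m i = ⌊(2:ℝ)^k * x i⌋₊ := min_eq_left h
      have h2 := Nat.lt_floor_add_one ((2:ℝ)^k * x i)
      rw [hmf]
      nlinarith
    · have hmf : m i = 2^k - 1 := min_eq_right (by omega)
      have h3 : ((m i) : ℝ) = (2:ℝ)^k - 1 := by
        rw [hmf]
        push_cast [h2k1]
        ring
      rw [h3]
      nlinarith [hx1 i]
  have hxQ : x ∈ dyadicCube n k m := fun i _ => ⟨hlow i, hhigh i⟩
  refine ⟨k, hk1, m, hmlt, hxQ, ?_⟩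
  set r : ℝ := ((2:ℝ)^k)⁻¹ with hr
  have hrpos : 0 < r := by rw [hr]; positivity
  set vr : ℝ := (((2:ℝ)^k)⁻¹) ^ n with hvr
  have hvrpos : 0 < vr := by rw [hvr]; positivity
  set Vr : ℝ := (2 * r) ^ n with hVr
  have hVreq : Vr = 2 ^ n * vr := by rw [hVr, hvr, hr, mul_pow]
  have hVrpos : 0 < Vr := by rw [hVr]; positivity
  have hvV : vr ≤ Vr := by nlinarith
  have hQball : dyadicCube n k m ⊆ Metric.closedBall x r := by
    intro y hy
    rw [Metric.mem_closedBall, dist_pi_le_iff hrpos.le]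
    intro i
    have hyi := hy i (Set.mem_univ i)
    simp only [Set.mem_Icc] at hyi
    have hgap : ((m i : ℝ) + 1) / 2 ^ k - (m i : ℝ) / 2 ^ k = r := by
      rw [hr]; field_simp; ring
    rw [Real.dist_eq, abs_sub_le_iff]
    constructor <;> linarith [hyi.1, hyi.2, hlow i, hhigh i]
  have hv : volume (dyadicCube n k m) = ENNReal.ofReal vr := volume_dyadicCube n k m
  have hV : volume (Metric.closedBall x r) = ENNReal.ofReal Vr := by
    rw [Real.volume_pi_closedBall x hrpos.le, Fintype.card_fin]
  have hVne0 : volume (Metric.closedBall x r) ≠ 0 := by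
    rw [hV, ne_eq, ENNReal.ofReal_eq_zero, not_le]; exact hVrpos
  have hVnetop : volume (Metric.closedBall x r) ≠ ⊤ := by
    rw [hV]; exact ENNReal.ofReal_ne_top
  have hball : c * ENNReal.ofReal Vr < volume (A ∩ Metric.closedBall x r) := by
    rw [← hV]
    exact (ENNReal.lt_div_iff_mul_lt (Or.inl hVne0) (Or.inl hVnetop)).1 hrk
  have hsplit : volume (A ∩ Metric.closedBall x r)
      ≤ volume (A ∩ dyadicCube n k m) + volume (Metric.closedBall x r \ dyadicCube n k m) := by
    refine le_trans (measure_mono ?_) (measure_union_le _ _)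
    intro y ⟨hyA, hyB⟩
    by_cases hyQ : y ∈ dyadicCube n k m
    · exact Or.inl ⟨hyA, hyQ⟩
    · exact Or.inr ⟨hyB, hyQ⟩
  have hdiff : volume (Metric.closedBall x r \ dyadicCube n k m)
      = ENNReal.ofReal Vr - ENNReal.ofReal vr := by
    rw [measure_diff hQball (measurable_dyadicCube n k m).nullMeasurableSet
      (by rw [hv]; exact ENNReal.ofReal_ne_top), hv, hV]
  have hw2 : w * 2 ^ n = (1 - δ) / 2 := by
    rw [hwdef]
    field_simp
    ring
  have hkey : ENNReal.ofReal δ * ENNReal.ofReal vr + (ENNReal.ofReal Vr - ENNReal.ofReal vr)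
      ≤ c * ENNReal.ofReal Vr := by
    rw [hc, ← ENNReal.ofReal_sub _ hvrpos.le, ← ENNReal.ofReal_mul hδ0.le,
      ← ENNReal.ofReal_mul hcr0.le,
      ← ENNReal.ofReal_add (by positivity) (by linarith)]
    apply ENNReal.ofReal_le_ofReal
    have h3 : (1 - w) * Vr = 2 ^ n * vr - (1 - δ) / 2 * vr := by
      rw [hVreq]
      calc (1 - w) * (2 ^ n * vr) = 2 ^ n * vr - (w * 2 ^ n) * vr := by ring
      _ = 2 ^ n * vr - (1 - δ) / 2 * vr := by rw [hw2]
    rw [h3, hVreq]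
    nlinarith [mul_nonneg (by linarith : (0:ℝ) ≤ 1 - δ) hvrpos.le]
  rw [hv]
  rw [hdiff] at hsplit
  have hfin : ENNReal.ofReal Vr - ENNReal.ofReal vr ≠ ⊤ :=
    ne_top_of_le_ne_top ENNReal.ofReal_ne_top tsub_le_self
  have h1 : ENNReal.ofReal δ * ENNReal.ofReal vr + (ENNReal.ofReal Vr - ENNReal.ofReal vr)
      < volume (A ∩ dyadicCube n k m) + (ENNReal.ofReal Vr - ENNReal.ofReal vr) :=
    lt_of_le_of_lt hkey (lt_of_lt_of_le hball hsplit)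
  exact (ENNReal.add_lt_add_iff_right hfin).1 h1

lemma dyadicCube_zero (n : ℕ) (m : Fin n → ℕ) (hm : ∀ i, m i < 2 ^ 0) :
    dyadicCube n 0 m = unitCube n := by
  have hm0 : ∀ i, m i = 0 := fun i => by have := hm i; omega
  unfold dyadicCube unitCube
  have h : (fun i : Fin n => Set.Icc ((m i : ℝ) / 2 ^ 0) (((m i : ℝ) + 1) / 2 ^ 0))
      = fun _ : Fin n => Set.Icc (0:ℝ) 1 := by
    funext i
    rw [hm0 i]
    norm_num
  rw [h]

/-- **A–B covering lemma (Calderón–Zygmund).** Let `δ ∈ (0,1)` and `A ⊆ B ⊆ Q₁` measurable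
with `|A| ≤ δ |Q₁|`, such that whenever a proper dyadic subcube `Q` of `Q₁` satisfies
`|A ∩ Q| > δ |Q|`, its dyadic predecessor is contained in `B`. Then `|A| ≤ δ |B|`. -/
theorem AB_covering_lemma (n : ℕ) (δ : ℝ) (hδ : δ ∈ Set.Ioo (0 : ℝ) 1)
    (A B : Set (Fin n → ℝ))
    (hAmeas : MeasurableSet A) (hBmeas : MeasurableSet B)
    (hAB : A ⊆ B) (hBQ : B ⊆ unitCube n)
    (hA : volume A ≤ ENNReal.ofReal δ * volume (unitCube n))
    (hdyadic : ∀ k : ℕ, 1 ≤ k → ∀ m : Fin n → ℕ, (∀ i, m i < 2 ^ k) →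
      ENNReal.ofReal δ * volume (dyadicCube n k m) < volume (A ∩ dyadicCube n k m) →
      dyadicCube n (k - 1) (fun i => m i / 2) ⊆ B) :
    volume A ≤ ENNReal.ofReal δ * volume B := by
  classical
  obtain ⟨hδ0, hδ1⟩ := hδ
  set d : ℝ≥0∞ := ENNReal.ofReal δ with hd
  set f : ℕ × (Fin n → ℕ) → Set (Fin n → ℝ) := fun q => dyadicCube n q.1 q.2 with hf
  set R : Set (ℕ × (Fin n → ℕ)) :=
    {q | (∀ i, q.2 i < 2 ^ q.1) ∧ ∃ b : ℕ × (Fin n → ℕ), (1 ≤ b.1 ∧ (∀ i, b.2 i < 2 ^ b.1) ∧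
      d * volume (f b) < volume (A ∩ f b)) ∧ q = (b.1 - 1, fun i => b.2 i / 2)} with hR
  -- bad cubes have predecessors in R
  have hpredR : ∀ b : ℕ × (Fin n → ℕ), 1 ≤ b.1 → (∀ i, b.2 i < 2 ^ b.1) →
      d * volume (f b) < volume (A ∩ f b) →
      ((b.1 - 1, fun i => b.2 i / 2) : ℕ × (Fin n → ℕ)) ∈ R := by
    intro b hb1 hbval hbbad
    refine ⟨?_, b, ⟨hb1, hbval, hbbad⟩, rfl⟩
    intro i
    have h2 : 2 ^ b.1 = 2 ^ (b.1 - 1) * 2 := by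
      rw [← pow_succ]
      congr 1
      omega
    have := hbval i
    simp only
    omega
  -- elements of R are contained in B
  have hRB : ∀ q ∈ R, f q ⊆ B := by
    rintro q ⟨hval, b, ⟨hb1, hbval, hbbad⟩, rfl⟩
    exact hdyadic b.1 hb1 b.2 hbval hbbad
  -- maximal elements
  set M : Set (ℕ × (Fin n → ℕ)) :=
    {r | r ∈ R ∧ ∀ r' ∈ R, f r ⊆ f r' → r.1 ≤ r'.1} with hM
  have hMR : M ⊆ R := fun r hr => hr.1
  -- every element of R is contained in a maximal element
  have hmax : ∀ N : ℕ, ∀ q ∈ R, q.1 ≤ N → ∃ r ∈ M, f q ⊆ f r := by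
    intro N
    induction N with
    | zero =>
      intro q hq hq0
      refine ⟨q, ⟨hq, fun r' _ _ => by omega⟩, subset_rfl⟩
    | succ N ih =>
      intro q hq hqN
      by_cases hqM : q ∈ M
      · exact ⟨q, hqM, subset_rfl⟩
      · have : ∃ r' ∈ R, f q ⊆ f r' ∧ r'.1 < q.1 := by
          rw [hM, Set.mem_setOf_eq] at hqM
          push_neg at hqM
          obtain ⟨r', hr', hsub, hlt⟩ := hqM hq
          exact ⟨r', hr', hsub, by omega⟩
        obtain ⟨r', hr'R, hsub, hlt⟩ := this
        obtain ⟨r, hrM, hsub2⟩ := ih r' hr'R (by omega)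
        exact ⟨r, hrM, hsub.trans hsub2⟩
  -- maximal cubes have small density
  have hMdens : ∀ r ∈ M, volume (A ∩ f r) ≤ d * volume (f r) := by
    rintro r ⟨hrR, hrmax⟩
    by_contra h
    push_neg at h
    rcases Nat.eq_zero_or_pos r.1 with hr0 | hr1
    · have hval := hrR.1
      rw [hr0] at hval
      have hcube : f r = unitCube n := by
        show dyadicCube n r.1 r.2 = unitCube n
        have h0 : dyadicCube n 0 r.2 = unitCube n := dyadicCube_zero n r.2 hval
        rw [hr0]
        exact h0
      rw [hcube] at h
      exact absurd (le_trans (measure_mono Set.inter_subset_left) hA) (not_le.2 h)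
    · have hbad := hpredR r hr1 hrR.1 h
      have hsub : f r ⊆ f (r.1 - 1, fun i => r.2 i / 2) :=
        dyadicCube_subset_pred n r.1 hr1 r.2
      have := hrmax _ hbad hsub
      simp only at this
      omega
  -- maximal cubes are pairwise a.e. disjoint
  have hdisj : ∀ r ∈ M, ∀ r' ∈ M, r ≠ r' → r.1 ≤ r'.1 → volume (f r ∩ f r') = 0 := by
    intro r hr r' hr' hne hle
    rcases dyadic_dichotomy n r.1 r'.1 hle r.2 r'.2 with hsub | h0
    · exfalso
      have hle2 := hr'.2 r (hMR hr) hsub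
      have heq : r'.1 = r.1 := le_antisymm hle2 hle
      have : r'.2 = r.2 := by
        apply dyadic_same_gen n r'.1 r.2 r'.2
        rw [← heq] at hsub
        exact hsub
      exact hne (Prod.ext heq this).symm
    · exact h0
  have hpairwise : M.Pairwise (Function.onFun (AEDisjoint volume) f) := by
    intro r hr r' hr' hne
    rcases le_total r.1 r'.1 with hle | hle
    · exact hdisj r hr r' hr' hne hle
    · exact (AEDisjoint.symm (hdisj r' hr' r hr hne.symm hle) : _)
  -- a.e. covering of A
  have hdens := Besicovitch.ae_tendsto_measure_inter_div volume A
  have hae : ∀ᵐ x ∂(volume : Measure (Fin n → ℝ)),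
      x ∈ A → x ∈ ⋃ r ∈ M, A ∩ f r := by
    filter_upwards [ae_imp_of_ae_restrict hdens] with x hx hxA
    have hxU : x ∈ unitCube n := hBQ (hAB hxA)
    obtain ⟨k, hk1, m, hmlt, hxQ, hbad⟩ := exists_bad_cube n δ hδ0 hδ1 A x
      (fun i => (hxU i trivial).1) (fun i => (hxU i trivial).2) (hx hxA)
    have hpred := hpredR (k, m) hk1 hmlt hbad
    obtain ⟨r, hrM, hsub⟩ := hmax (k - 1) _ hpred le_rfl
    have hx2 : x ∈ f (k - 1, fun i => m i / 2) :=
      dyadicCube_subset_pred n k hk1 m hxQ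
    exact Set.mem_biUnion hrM ⟨hxA, hsub hx2⟩
  -- assemble
  have hcnt : M.Countable := M.to_countable
  have h1 : volume A ≤ volume (⋃ r ∈ M, A ∩ f r) := by
    apply measure_mono_ae
    filter_upwards [hae] with x hx
    exact hx
  have h2 : volume (⋃ r ∈ M, A ∩ f r) ≤ ∑' r : M, volume (A ∩ f r) :=
    measure_biUnion_le volume hcnt _
  have h3 : ∑' r : M, volume (A ∩ f r) ≤ ∑' r : M, d * volume (f r) :=
    ENNReal.tsum_le_tsum fun r => hMdens r r.2
  have h4 : ∑' r : M, d * volume (f r) = d * ∑' r : M, volume (f r) :=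
    ENNReal.tsum_mul_left
  have h5 : ∑' r : M, volume (f r) = volume (⋃ r ∈ M, f r) :=
    (measure_biUnion₀ hcnt hpairwise fun r _ =>
      (measurable_dyadicCube n r.1 r.2).nullMeasurableSet).symm
  have h6 : volume (⋃ r ∈ M, f r) ≤ volume B :=
    measure_mono (Set.iUnion₂_subset fun r hr => hRB r (hMR hr))
  calc volume A ≤ ∑' r : M, volume (A ∩ f r) := le_trans h1 h2
  _ ≤ d * ∑' r : M, volume (f r) := by rw [← h4]; exact h3
  _ = d * volume (⋃ r ∈ M, f r) := by rw [h5]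
  _ ≤ d * volume B := mul_le_mul_right h6 _
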